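/- Let C₃ ⊆ {0,1,2}^{ℤ²} be the space of proper 3-colourings of ℤ². For every integer n ≥ 1 there exists a configuration x̃ ∈ FPert(C₃) such that Def(x̃) consists of exactly two adjacent cells, and for every y ∈ C₃ with Δ(x̃, y) finite, the diameter of Δ(x̃, y) is at least n. In other words, correcting a single defect of a 3-colouring may require modifying cells arbitrarily far away. -/
import Mathlib


/-- The two standard basis vectors of `ℤ²`. -/
def e1 : ℤ × ℤ := (1, 0)
def e2 : ℤ × ℤ := (0, 1)

/-- The space of proper 3-colourings of `ℤ²`. -/
def C3 : Set (ℤ × ℤ → Fin 3) :=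
  {x | ∀ c : ℤ × ℤ, x c ≠ x (c + e1) ∧ x c ≠ x (c + e2)}

/-- The set of cells where two configurations on `ℤ²` disagree. -/
def diffSet (x y : ℤ × ℤ → Fin 3) : Set (ℤ × ℤ) := {i | x i ≠ y i}

/-- Finite perturbations of elements of `X`. -/
def FPert (X : Set (ℤ × ℤ → Fin 3)) : Set (ℤ × ℤ → Fin 3) :=
  {y | ∃ x ∈ X, (diffSet x y).Finite}

/-- Defective cells of a colouring: cells sharing their colour with one of
their four nearest neighbours. -/
def Def3 (x : ℤ × ℤ → Fin 3) : Set (ℤ × ℤ) :=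
  {c | x c = x (c + e1) ∨ x c = x (c + e2) ∨ x c = x (c - e1) ∨ x c = x (c - e2)}

/-- Two cells of `ℤ²` are adjacent if their `ℓ¹` distance is `1`. -/
def Adjacent (p q : ℤ × ℤ) : Prop := |p.1 - q.1| + |p.2 - q.2| = 1

/-- The diameter of a set `S ⊆ ℤ²`: the least `m` with `S ⊆ i + [0,m)²` for some `i`. -/
noncomputable def diam2 (S : Set (ℤ × ℤ)) : ℕ :=
  sInf {m : ℕ | ∃ i : ℤ × ℤ, ∀ a ∈ S,
    i.1 ≤ a.1 ∧ a.1 < i.1 + (m : ℤ) ∧ i.2 ≤ a.2 ∧ a.2 < i.2 + (m : ℤ)}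

/- ## Auxiliary definitions -/

def toF (z : ℤ) : Fin 3 := ⟨(z % 3).toNat, by omega⟩

def sg (u v : Fin 3) : ℤ := if v = u + 1 then 1 else -1

def ht (n : ℕ) (p q : ℤ) : ℤ :=
  (if -(n:ℤ) ≤ p then p else -2*n - p) + (if 0 ≤ q then q else -q) +
  (if q = 0 ∧ 1 ≤ p ∧ p ≤ (n:ℤ)+1 then 2 else 0)

def hx (n : ℕ) (p q : ℤ) : ℤ :=
  (if -(n:ℤ) ≤ p then p else -2*n - p) + (if 0 ≤ q then q else -q)

def xtil (n : ℕ) (c : ℤ × ℤ) : Fin 3 := toF (ht n c.1 c.2)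

def xb (n : ℕ) (c : ℤ × ℤ) : Fin 3 := toF (hx n c.1 c.2)

/- ## Basic lemmas -/

lemma add_e1 (c : ℤ × ℤ) : c + e1 = (c.1 + 1, c.2) := by
  simp [e1, Prod.ext_iff]

lemma add_e2 (c : ℤ × ℤ) : c + e2 = (c.1, c.2 + 1) := by
  simp [e2, Prod.ext_iff]

lemma sub_e1 (c : ℤ × ℤ) : c - e1 = (c.1 - 1, c.2) := by
  simp [e1, Prod.ext_iff]

lemma sub_e2 (c : ℤ × ℤ) : c - e2 = (c.1, c.2 - 1) := by
  simp [e2, Prod.ext_iff]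

lemma toF_add_one (u : ℤ) : toF (u + 1) = toF u + 1 := by
  apply Fin.ext
  simp [toF, Fin.val_add]
  omega

lemma sg_up (u : ℤ) : sg (toF u) (toF (u + 1)) = 1 := by
  simp [sg, toF_add_one]

lemma sg_down (u : ℤ) : sg (toF u) (toF (u - 1)) = -1 := by
  have h : toF (u - 1) ≠ toF u + 1 := by
    rw [← toF_add_one]
    intro h
    have := congrArg Fin.val h
    simp [toF] at this
    omega
  simp [sg, h]

lemma sg_pm (u v : Fin 3) : sg u v = 1 ∨ sg u v = -1 := by
  unfold sg; split_ifs <;> simp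

lemma toF_ne (u v : ℤ) (h : v - u = 1 ∨ v - u = -1) : toF u ≠ toF v := by
  intro hh
  have := congrArg Fin.val hh
  simp [toF] at this
  omega

lemma toF_eq3 (u v : ℤ) (h : v - u = 3) : toF u = toF v := by
  apply Fin.ext
  simp [toF]
  omega

/- ## Step lemmas for ht and hx -/

lemma ht_h (n : ℕ) (p q : ℤ) (h : ¬(p = 0 ∧ q = 0)) :
    ht n (p+1) q - ht n p q = 1 ∨ ht n (p+1) q - ht n p q = -1 := by
  unfold ht; split_ifs <;> omega

lemma ht_v (n : ℕ) (p q : ℤ) :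
    ht n p (q+1) - ht n p q = 1 ∨ ht n p (q+1) - ht n p q = -1 := by
  unfold ht; split_ifs <;> omega

lemma ht_defect (n : ℕ) : ht n 1 0 - ht n 0 0 = 3 := by
  unfold ht; split_ifs <;> omega

lemma hx_h (n : ℕ) (p q : ℤ) :
    hx n (p+1) q - hx n p q = 1 ∨ hx n (p+1) q - hx n p q = -1 := by
  unfold hx; split_ifs <;> omega

lemma hx_v (n : ℕ) (p q : ℤ) :
    hx n p (q+1) - hx n p q = 1 ∨ hx n p (q+1) - hx n p q = -1 := by
  unfold hx; split_ifs <;> omega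

lemma xb_mem_C3 (n : ℕ) : xb n ∈ C3 := by
  intro c
  rw [add_e1, add_e2]
  exact ⟨toF_ne _ _ (hx_h n c.1 c.2), toF_ne _ _ (hx_v n c.1 c.2)⟩

lemma xtil_FPert (n : ℕ) : xtil n ∈ FPert C3 := by
  refine ⟨xb n, xb_mem_C3 n, ?_⟩
  apply Set.Finite.subset (Set.finite_Icc ((1:ℤ), (0:ℤ)) ((n:ℤ)+1, (0:ℤ)))
  intro i hi
  simp only [diffSet, Set.mem_setOf_eq] at hi
  have : ¬ (hx n i.1 i.2 = ht n i.1 i.2) := fun h => hi (by simp [xb, xtil, h])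
  unfold ht hx at this
  simp only [Set.mem_Icc, Prod.le_def]
  constructor <;> constructor <;> (by_contra hc; apply this; split_ifs <;> omega)

lemma xtil_def3 (n : ℕ) : Def3 (xtil n) = {((0:ℤ),(0:ℤ)), ((1:ℤ),(0:ℤ))} := by
  ext c
  obtain ⟨p, q⟩ := c
  simp only [Def3, Set.mem_setOf_eq, Set.mem_insert_iff, Set.mem_singleton_iff,
    add_e1, add_e2, sub_e1, sub_e2, Prod.mk.injEq]
  constructor
  · rintro (h | h | h | h)
    · by_cases hc : p = 0 ∧ q = 0
      · left; exact ⟨hc.1, hc.2⟩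
      · exact absurd h (toF_ne _ _ (ht_h n p q hc))
    · exact absurd h (toF_ne _ _ (ht_v n p q))
    · by_cases hc : p - 1 = 0 ∧ q = 0
      · right; constructor <;> omega
      · have := toF_ne _ _ (ht_h n (p-1) q hc)
        rw [show p - 1 + 1 = p by ring] at this
        exact absurd h.symm this
    · have := toF_ne _ _ (ht_v n p (q-1))
      rw [show q - 1 + 1 = q by ring] at this
      exact absurd h.symm this
  · rintro (⟨h1, h2⟩ | ⟨h1, h2⟩) <;> subst h1 <;> subst h2
    · exact Or.inl (toF_eq3 _ _ (ht_defect n))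
    · refine Or.inr (Or.inr (Or.inl ?_))
      exact (toF_eq3 _ _ (ht_defect n)).symm

/- ## Height-increment (winding) machinery for proper colourings -/

lemma sg_aux : ∀ a b c d : Fin 3, a ≠ b → a ≠ c → b ≠ d → c ≠ d →
    sg a b - sg c d = sg a c - sg b d := by decide

lemma plaq {y : ℤ × ℤ → Fin 3} (hy : y ∈ C3) (p q : ℤ) :
    sg (y (p,q)) (y (p+1,q)) - sg (y (p,q+1)) (y (p+1,q+1))
      = sg (y (p,q)) (y (p,q+1)) - sg (y (p+1,q)) (y (p+1,q+1)) := by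
  have h1 := (hy (p,q)).1
  have h2 := (hy (p,q)).2
  have h3 := (hy (p+1,q)).2
  have h4 := (hy (p,q+1)).1
  rw [add_e1] at h1 h4
  rw [add_e2] at h2 h3
  exact sg_aux _ _ _ _ h1 h2 h3 h4

def rowS (y : ℤ × ℤ → Fin 3) (a q : ℤ) (L : ℕ) : ℤ :=
  ∑ t ∈ Finset.range L, sg (y (a + t, q)) (y (a + t + 1, q))

lemma row_step {y : ℤ × ℤ → Fin 3} (hy : y ∈ C3) (a q : ℤ) (L : ℕ) :
    rowS y a q L = rowS y a (q+1) L
      + (sg (y (a, q)) (y (a, q+1)) - sg (y (a + L, q)) (y (a + L, q+1))) := by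
  have key : rowS y a q L - rowS y a (q+1) L
      = sg (y (a, q)) (y (a, q+1)) - sg (y (a + L, q)) (y (a + L, q+1)) := by
    unfold rowS
    rw [← Finset.sum_sub_distrib]
    have e : ∀ t ∈ Finset.range L,
        sg (y (a + t, q)) (y (a + t + 1, q)) - sg (y (a + t, q+1)) (y (a + t + 1, q+1))
        = (fun s : ℕ => sg (y (a + s, q)) (y (a + s, q+1))) t
          - (fun s : ℕ => sg (y (a + s, q)) (y (a + s, q+1))) (t+1) := by
      intro t _
      have := plaq hy (a + t) q
      simp only []
      rw [this]
      push_cast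
      ring_nf
    rw [Finset.sum_congr rfl e, Finset.sum_range_sub']
    push_cast
    ring_nf
  omega

lemma green {y : ℤ × ℤ → Fin 3} (hy : y ∈ C3) (a : ℤ) (L : ℕ) (Y : ℕ) :
    rowS y a 0 L = rowS y a Y L
      + ∑ r ∈ Finset.range Y,
          (sg (y (a, r)) (y (a, r+1)) - sg (y (a + L, r)) (y (a + L, r+1))) := by
  induction Y with
  | zero => simp
  | succ Y ih =>
    rw [ih, Finset.sum_range_succ]
    have := row_step hy a (Y:ℤ) L
    rw [show ((Y+1 : ℕ) : ℤ) = (Y:ℤ) + 1 by push_cast; ring]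
    omega

lemma exists_box {F : Set (ℤ × ℤ)} (h : F.Finite) :
    ∃ m : ℕ, ∃ i : ℤ × ℤ, ∀ a ∈ F,
      i.1 ≤ a.1 ∧ a.1 < i.1 + (m:ℤ) ∧ i.2 ≤ a.2 ∧ a.2 < i.2 + (m:ℤ) := by
  obtain ⟨u, hu⟩ := h.bddAbove
  obtain ⟨l, hl⟩ := h.bddBelow
  refine ⟨((u.1 - l.1).toNat + (u.2 - l.2).toNat + 1), l, fun a ha => ?_⟩
  have h1 := hu ha
  have h2 := hl ha
  rw [Prod.le_def] at h1 h2
  push_cast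
  omega

lemma key_lemma (n : ℕ) (hn : 1 ≤ n) (y : ℤ × ℤ → Fin 3) (hy : y ∈ C3)
    (m : ℕ) (i : ℤ × ℤ)
    (hbox : ∀ a ∈ diffSet (xtil n) y,
      i.1 ≤ a.1 ∧ a.1 < i.1 + (m:ℤ) ∧ i.2 ≤ a.2 ∧ a.2 < i.2 + (m:ℤ)) :
    n ≤ m := by
  by_contra hcon
  push_neg at hcon
  -- cells outside the box agree with xtil n
  have hout : ∀ p q : ℤ,
      (p < i.1 ∨ i.1 + (m:ℤ) ≤ p ∨ q < i.2 ∨ i.2 + (m:ℤ) ≤ q) →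
      y (p, q) = xtil n (p, q) := by
    intro p q hor
    by_contra hne
    have hmem : (p, q) ∈ diffSet (xtil n) y := fun h => hne h.symm
    have := hbox _ hmem
    simp only at this
    omega
  -- the defect edge forces a difference at (0,0) or (1,0)
  have hdef : xtil n (0, 0) = xtil n (1, 0) := toF_eq3 _ _ (ht_defect n)
  have hprop := (hy (0, 0)).1
  rw [add_e1] at hprop
  simp only at hprop
  have hin : ((0:ℤ), (0:ℤ)) ∈ diffSet (xtil n) y ∨ ((1:ℤ), (0:ℤ)) ∈ diffSet (xtil n) y := by
    by_contra hc
    push_neg at hc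
    simp only [diffSet, Set.mem_setOf_eq, not_not] at hc
    exact hprop (hc.1 ▸ hc.2 ▸ hdef ▸ rfl)
  -- box position facts
  have hpos : i.1 ≤ 1 ∧ 0 < i.1 + (m:ℤ) ∧ i.2 ≤ 0 ∧ 0 < i.2 + (m:ℤ) := by
    rcases hin with h | h <;> (have := hbox _ h; simp only at this; omega)
  obtain ⟨hp1, hp2, hp3, hp4⟩ := hpos
  set Y : ℕ := (i.2 + (m:ℤ)).toNat with hYdef
  have hYz : (Y:ℤ) = i.2 + (m:ℤ) := by omega
  have hY1 : 1 ≤ Y := by omega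
  -- abbreviations
  have houtL : ∀ q : ℤ, y (-(n:ℤ), q) = xtil n (-(n:ℤ), q) :=
    fun q => hout _ _ (Or.inl (by omega))
  have houtR : ∀ q : ℤ, y ((n:ℤ)+1, q) = xtil n ((n:ℤ)+1, q) :=
    fun q => hout _ _ (Or.inr (Or.inl (by omega)))
  have houtT : ∀ p : ℤ, y (p, (Y:ℤ)) = xtil n (p, (Y:ℤ)) :=
    fun p => hout _ _ (Or.inr (Or.inr (Or.inr (by omega))))
  -- Green's identity
  have hG := green hy (-(n:ℤ)) (2*n+1) Y
  have hcast : (-(n:ℤ)) + ((2*n+1 : ℕ) : ℤ) = (n:ℤ) + 1 := by push_cast; ring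
  rw [hcast] at hG
  -- evaluate the top row sum
  have hTop : rowS y (-(n:ℤ)) (Y:ℤ) (2*n+1) = ((2*n+1 : ℕ) : ℤ) := by
    unfold rowS
    have e : ∀ t ∈ Finset.range (2*n+1),
        sg (y (-(n:ℤ) + t, (Y:ℤ))) (y (-(n:ℤ) + t + 1, (Y:ℤ))) = 1 := by
      intro t _
      rw [houtT, houtT]
      show sg (toF (ht n (-(n:ℤ) + t) (Y:ℤ))) (toF (ht n (-(n:ℤ) + t + 1) (Y:ℤ))) = 1
      have e2 : ht n (-(n:ℤ) + t + 1) (Y:ℤ) = ht n (-(n:ℤ) + t) (Y:ℤ) + 1 := by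
        unfold ht
        have ht0 : (0:ℤ) ≤ (t:ℤ) := by positivity
        split_ifs <;> omega
      rw [e2]
      exact sg_up _
    rw [Finset.sum_congr rfl e, Finset.sum_const, Finset.card_range, nsmul_eq_mul, mul_one]
  -- evaluate the left column sum
  have hLeft : ∑ r ∈ Finset.range Y, sg (y (-(n:ℤ), (r:ℤ))) (y (-(n:ℤ), (r:ℤ)+1)) = (Y:ℤ) := by
    have e : ∀ r ∈ Finset.range Y,
        sg (y (-(n:ℤ), (r:ℤ))) (y (-(n:ℤ), (r:ℤ)+1)) = 1 := by
      intro r _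
      rw [houtL, houtL]
      show sg (toF (ht n (-(n:ℤ)) (r:ℤ))) (toF (ht n (-(n:ℤ)) ((r:ℤ)+1))) = 1
      have e2 : ht n (-(n:ℤ)) ((r:ℤ)+1) = ht n (-(n:ℤ)) (r:ℤ) + 1 := by
        unfold ht
        have hr0 : (0:ℤ) ≤ (r:ℤ) := by positivity
        split_ifs <;> omega
      rw [e2]
      exact sg_up _
    rw [Finset.sum_congr rfl e, Finset.sum_const, Finset.card_range, nsmul_eq_mul, mul_one]
  -- evaluate the right column sum
  have hRight : ∑ r ∈ Finset.range Y, sg (y ((n:ℤ)+1, (r:ℤ))) (y ((n:ℤ)+1, (r:ℤ)+1)) = (Y:ℤ) - 2 := by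
    obtain ⟨K, hK⟩ : ∃ K, Y = K + 1 := ⟨Y - 1, by omega⟩
    rw [hK, Finset.sum_range_succ']
    have e : ∀ r ∈ Finset.range K,
        sg (y ((n:ℤ)+1, ((r+1:ℕ):ℤ))) (y ((n:ℤ)+1, ((r+1:ℕ):ℤ)+1)) = 1 := by
      intro r _
      rw [houtR, houtR]
      show sg (toF (ht n ((n:ℤ)+1) ((r+1:ℕ):ℤ)))
        (toF (ht n ((n:ℤ)+1) (((r+1:ℕ):ℤ)+1))) = 1
      have e2 : ht n ((n:ℤ)+1) (((r+1:ℕ):ℤ)+1) = ht n ((n:ℤ)+1) ((r+1:ℕ):ℤ) + 1 := by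
        unfold ht
        have hr0 : (0:ℤ) < ((r+1:ℕ):ℤ) := by positivity
        split_ifs <;> omega
      rw [e2]
      exact sg_up _
    have e0 : sg (y ((n:ℤ)+1, ((0:ℕ):ℤ))) (y ((n:ℤ)+1, ((0:ℕ):ℤ)+1)) = -1 := by
      rw [houtR, houtR]
      show sg (toF (ht n ((n:ℤ)+1) ((0:ℕ):ℤ))) (toF (ht n ((n:ℤ)+1) (((0:ℕ):ℤ)+1))) = -1
      have e2 : ht n ((n:ℤ)+1) (((0:ℕ):ℤ)+1) = ht n ((n:ℤ)+1) ((0:ℕ):ℤ) - 1 := by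
        unfold ht
        split_ifs <;> omega
      rw [e2]
      exact sg_down _
    rw [Finset.sum_congr rfl e, e0, Finset.sum_const, Finset.card_range, nsmul_eq_mul, mul_one]
    push_cast
    omega
  -- bound on the bottom row sum
  have hBound : rowS y (-(n:ℤ)) 0 (2*n+1) ≤ ((2*n+1:ℕ):ℤ) := by
    unfold rowS
    calc ∑ t ∈ Finset.range (2*n+1), sg (y (-(n:ℤ) + t, 0)) (y (-(n:ℤ) + t + 1, 0))
        ≤ ∑ _t ∈ Finset.range (2*n+1), (1:ℤ) := by
          apply Finset.sum_le_sum
          intro t _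
          rcases sg_pm (y (-(n:ℤ) + t, 0)) (y (-(n:ℤ) + t + 1, 0)) with h | h <;> omega
      _ = ((2*n+1:ℕ):ℤ) := by
          rw [Finset.sum_const, Finset.card_range, nsmul_eq_mul, mul_one]
  -- assemble
  rw [Finset.sum_sub_distrib, hTop, hLeft, hRight] at hG
  rw [hG] at hBound
  omega


/-- Correcting a single defect of a 3-colouring may require modifying cells
arbitrarily far away: for every `n ≥ 1` there is a finite perturbation `x̃` of a
3-colouring whose defect set consists of exactly two adjacent cells, yet every
3-colouring `y` differing from `x̃` on a finite set differs from it on a set of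
diameter at least `n`. -/
theorem stmt10 (n : ℕ) (hn : 1 ≤ n) :
    ∃ xt : ℤ × ℤ → Fin 3,
      xt ∈ FPert C3 ∧
      (∃ c d : ℤ × ℤ, c ≠ d ∧ Adjacent c d ∧ Def3 xt = {c, d}) ∧
      (∀ y ∈ C3, (diffSet xt y).Finite → n ≤ diam2 (diffSet xt y)) := by
  refine ⟨xtil n, xtil_FPert n, ⟨((0:ℤ),(0:ℤ)), ((1:ℤ),(0:ℤ)), by simp [Prod.ext_iff],
    by norm_num [Adjacent], xtil_def3 n⟩, ?_⟩
  intro y hy hfin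
  have hne : {m : ℕ | ∃ i : ℤ × ℤ, ∀ a ∈ diffSet (xtil n) y,
      i.1 ≤ a.1 ∧ a.1 < i.1 + (m:ℤ) ∧ i.2 ≤ a.2 ∧ a.2 < i.2 + (m:ℤ)}.Nonempty := by
    obtain ⟨m, i, h⟩ := exists_box hfin
    exact ⟨m, i, h⟩
  have hmem := Nat.sInf_mem hne
  obtain ⟨i, hi⟩ := hmem
  exact key_lemma n hn y hy _ i hi
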